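/- arXiv:2504.07407 — 3 statements merged into one kernel-verified Lean document; each statement's English description precedes it below -/
import Mathlib

section
/- Let A be an associative algebra over a commutative ring, let D : A → A be a derivation (D(xy) = D(x)y + xD(y)), let tr : A → C be a linear map into a module with tr(xy) = tr(yx), and suppose R, a ∈ A satisfy D(R) = aR − Ra. Then tr(D(R^k)) = 0 for every k ≥ 1. -/
/-- Bianchi-identity argument: if `D` is a derivation, `tr` a cyclic trace, and
`D R = aR − Ra` is a commutator, then `tr(D(R^k)) = 0` for all `k ≥ 1`. -/
theorem stmt5 {A C : Type*} [Ring A] [AddCommGroup C]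
    (D : A →+ A) (hD : ∀ x y : A, D (x * y) = D x * y + x * D y)
    (tr : A →+ C) (htr : ∀ x y : A, tr (x * y) = tr (y * x))
    (R a : A) (hR : D R = a * R - R * a) (k : ℕ) (hk : 1 ≤ k) :
    tr (D (R ^ k)) = 0 := by
  have hone : D 1 = 0 := by
    have := hD 1 1
    simpa using this
  have key : ∀ n : ℕ, D (R ^ n) = a * R ^ n - R ^ n * a := by
    intro n
    induction n with
    | zero => simp [hone]
    | succ m ih =>
      rw [pow_succ, hD, ih, hR]
      noncomm_ring
  rw [key, map_sub, htr, sub_self]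
end

section
/- Let A be a (not necessarily commutative) ring and θ₁, …, θ_{ℓ+1} ∈ A. Fix a permutation σ of {1,…,ℓ+1} and an index 1 ≤ j ≤ ℓ, and define σ_j : {1,…,ℓ+1} → {1,…,ℓ} by σ_j(k) = σ(k) if σ(k) ≤ j and σ_j(k) = σ(k) − 1 if σ(k) > j. For a function ν : {1,…,ℓ+1} → {1,…,ℓ} and elements φ₁,…,φ_ℓ ∈ A write b_ν(φ₁,…,φ_ℓ) = φ_{ν(1)}·⋯·φ_{ν(ℓ+1)}. Then b_{σ_j}(θ₂,…,θ_{ℓ+1}) + Σ_{i=1}^{ℓ} (−1)^i · b_{σ_j}(θ₁,…,θ_i + θ_{i+1},…,θ_{ℓ+1}) + (−1)^{ℓ+1} · b_{σ_j}(θ₁,…,θ_ℓ) = (−1)^j · ( θ_{σ(1)}⋯θ_{σ(ℓ+1)} + θ_{τ(1)}⋯θ_{τ(ℓ+1)} ), where τ is σ composed with the transposition swapping the two positions at which σ takes the values j and j+1 (i.e. the right-hand side is the sum of the product in the order σ and the product with the values j and j+1 interchanged). -/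
/-- Ordered product `φ_{ν(0)} ⋯ φ_{ν(m-1)}` (noncommutative). -/
def obprod {A : Type*} [Ring A] {m : ℕ} (φ : Fin m → A) : A := (List.ofFn φ).prod

/-- For a permutation `σ` of `Fin (ℓ+1)` (0-based model of `{1,…,ℓ+1}`) and `j < ℓ`
(0-based model of `1 ≤ j ≤ ℓ`), the map `σ_j : Fin (ℓ+1) → Fin ℓ` given by
`σ_j(k) = σ(k)` if `σ(k) ≤ j` and `σ(k) − 1` otherwise. -/
def sigmaj (ℓ : ℕ) (σ : Equiv.Perm (Fin (ℓ + 1))) (j : ℕ) (hj : j < ℓ) :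
    Fin (ℓ + 1) → Fin ℓ := fun k =>
  if h : (σ k : ℕ) ≤ j then ⟨(σ k : ℕ), by omega⟩
  else ⟨(σ k : ℕ) - 1, by have := (σ k).isLt; omega⟩

/-- The tuple `(θ₁,…,θ_i + θ_{i+1},…,θ_{ℓ+1})` obtained by merging the entries at
(0-based) positions `i` and `i+1`. -/
def mergeAt {A : Type*} [Ring A] {ℓ : ℕ} (θ : Fin (ℓ + 1) → A) (i : ℕ) : Fin ℓ → A :=
  fun m =>
    if (m : ℕ) < i then θ m.castSucc
    else if (m : ℕ) = i then θ m.castSucc + θ m.succ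
    else θ m.succ

/-!
Let `F_p = b_ν(θ₁, …, θ̂_p, …, θ_{ℓ+1})`. By multilinearity, `b_ν(…, θ_i + θ_{i+1}, …)` is a sum
over the subsets `s` of the fibre `ν⁻¹(i)`, the factors in `s` taking `θ_i` and the others
`θ_{i+1}`. The terms `s = ν⁻¹(i)` and `s = ∅` are `F_{i+1}` and `F_i`; in the alternating sum they
telescope against the two end terms `F_0` and `F_{ℓ+1}`. So for surjective `ν` only the proper
nonempty subsets of the fibres survive. For `ν = σ_j` every fibre is a singleton except
`ν⁻¹(j) = {σ⁻¹(j), σ⁻¹(j+1)}`, and its two singletons give the products in the order `σ` and in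
the order `σ` with the values `j`, `j+1` interchanged.
-/

open Finset

section Boundary

variable {A : Type*} [Ring A] {ℓ n : ℕ}

lemma obprod_piecewise_add (t : Finset (Fin n)) (a b : Fin n → A) :
    obprod (t.piecewise (a + b) b) = ∑ s ∈ t.powerset, obprod (s.piecewise a b) := by
  simpa only [obprod, MultilinearMap.mkPiAlgebraFin_apply] using
    (MultilinearMap.mkPiAlgebraFin ℤ n A).map_piecewise_add a b t

lemma mergeAt_self (θ : Fin (ℓ + 1) → A) (i : Fin ℓ) :
    mergeAt θ i i = θ i.castSucc + θ i.succ := by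
  simp [mergeAt]

lemma mergeAt_of_ne (θ : Fin (ℓ + 1) → A) {i m : Fin ℓ} (h : m ≠ i) :
    mergeAt θ i m = θ (i.castSucc.succAbove m) := by
  rcases lt_or_gt_of_ne h with h | h
  · simp [mergeAt, Fin.lt_def.mp h, Fin.succAbove_castSucc_of_lt _ _ h]
  · have hmi : ¬ (m : ℕ) < i ∧ (m : ℕ) ≠ i := by
      have := Fin.lt_def.mp h; omega
    simp [mergeAt, hmi, Fin.succAbove_castSucc_of_le _ _ h.le]

lemma Fin.succAbove_castSucc_eq_succAbove_succ {i m : Fin ℓ} (h : m ≠ i) :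
    i.castSucc.succAbove m = i.succ.succAbove m := by
  rcases lt_or_gt_of_ne h with h | h
  · rw [Fin.succAbove_castSucc_of_lt _ _ h, Fin.succAbove_succ_of_le _ _ h.le]
  · rw [Fin.succAbove_castSucc_of_le _ _ h.le, Fin.succAbove_succ_of_lt _ _ h]

def faceProd (θ : Fin (ℓ + 1) → A) (ν : Fin n → Fin ℓ) (p : Fin (ℓ + 1)) : A :=
  obprod fun k => θ (p.succAbove (ν k))

/-- For `s ⊆ ν⁻¹(i)`: the term of the multilinear expansion of `b_ν(…, θ_i + θ_{i+1}, …)` taking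
`θ_i` at the factors in `s` and `θ_{i+1}` at the rest of the fibre. -/
def splitProd (θ : Fin (ℓ + 1) → A) (ν : Fin n → Fin ℓ) (i : Fin ℓ) (s : Finset (Fin n)) : A :=
  obprod (s.piecewise (fun _ => θ i.castSucc) fun k => θ (i.castSucc.succAbove (ν k)))

lemma obprod_mergeAt (θ : Fin (ℓ + 1) → A) (ν : Fin n → Fin ℓ) (i : Fin ℓ) (hi : ∃ k, ν k = i) :
    obprod (fun k => mergeAt θ i (ν k)) = faceProd θ ν i.succ + faceProd θ ν i.castSucc
      + ∑ s ∈ ({k | ν k = i} : Finset (Fin n)).ssubsets.erase ∅, splitProd θ ν i s := by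
  set t : Finset (Fin n) := {k | ν k = i}
  have hmerge : (fun k => mergeAt θ i (ν k)) = t.piecewise
      ((fun _ => θ i.castSucc) + fun k => θ (i.castSucc.succAbove (ν k)))
      (fun k => θ (i.castSucc.succAbove (ν k))) := by
    funext k
    by_cases hk : ν k = i
    · simp [t, hk, mergeAt_self]
    · simp [t, hk, mergeAt_of_ne]
  have hfull : splitProd θ ν i t = faceProd θ ν i.succ := by
    unfold splitProd faceProd
    congr 1
    funext k
    by_cases hk : ν k = i
    · simp [t, hk]
    · simp [t, hk, Fin.succAbove_castSucc_eq_succAbove_succ hk]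
  have hempty : splitProd θ ν i ∅ = faceProd θ ν i.castSucc := by
    simp [splitProd, faceProd]
  have ht : t.Nonempty := by
    obtain ⟨k, hk⟩ := hi
    exact ⟨k, by simp [t, hk]⟩
  rw [hmerge, obprod_piecewise_add, ← add_sum_erase _ _ (mem_powerset_self t)]
  change splitProd θ ν i t + ∑ s ∈ t.ssubsets, splitProd θ ν i s = _
  rw [← add_sum_erase _ _ (empty_mem_ssubsets ht), hfull, hempty, add_assoc]

theorem Fin.alternating_sum_adjacent_eq_zero {M : Type*} [AddCommGroup M] (F : Fin (ℓ + 1) → M) :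
    F 0 + ∑ i : Fin ℓ, (-1 : ℤ) ^ ((i : ℕ) + 1) • (F i.succ + F i.castSucc)
      + (-1 : ℤ) ^ (ℓ + 1) • F (Fin.last ℓ) = 0 := by
  set g : Fin (ℓ + 1) → M := fun p => (-1 : ℤ) ^ (p : ℕ) • F p
  have hterm : ∀ i : Fin ℓ,
      (-1 : ℤ) ^ ((i : ℕ) + 1) • (F i.succ + F i.castSucc) = g i.succ - g i.castSucc := by
    intro i
    simp only [g, Fin.val_succ, Fin.val_castSucc, pow_succ, mul_neg_one, neg_smul, smul_add]
    abel
  have htelescope : ∑ i : Fin ℓ, g i.succ - ∑ i : Fin ℓ, g i.castSucc = g (Fin.last ℓ) - g 0 := by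
    rw [sub_eq_sub_iff_add_eq_add, add_comm, ← Fin.sum_univ_succ, Fin.sum_univ_castSucc,
      add_comm]
  rw [sum_congr rfl fun i _ => hterm i, sum_sub_distrib, htelescope]
  simp only [g, Fin.val_zero, Fin.val_last, pow_zero, one_smul, pow_succ, mul_neg_one, neg_smul]
  abel

theorem obprod_boundary_eq_sum_splitProd (θ : Fin (ℓ + 1) → A) (ν : Fin n → Fin ℓ)
    (hν : Function.Surjective ν) :
    obprod (fun k => θ (ν k).succ)
        + ∑ i ∈ range ℓ, (-1 : ℤ) ^ (i + 1) • obprod (fun k => mergeAt θ i (ν k))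
        + (-1 : ℤ) ^ (ℓ + 1) • obprod (fun k => θ (ν k).castSucc)
      = ∑ i : Fin ℓ, (-1 : ℤ) ^ ((i : ℕ) + 1) •
          ∑ s ∈ ({k | ν k = i} : Finset (Fin n)).ssubsets.erase ∅, splitProd θ ν i s := by
  have hfirst : obprod (fun k => θ (ν k).succ) = faceProd θ ν 0 := rfl
  have hlast : obprod (fun k => θ (ν k).castSucc) = faceProd θ ν (Fin.last ℓ) := by
    simp [faceProd]
  rw [hfirst, hlast, sum_range fun i => (-1 : ℤ) ^ (i + 1) • obprod fun k => mergeAt θ i (ν k)]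
  simp only [obprod_mergeAt θ ν _ (hν _), smul_add, sum_add_distrib]
  have hfaces := Fin.alternating_sum_adjacent_eq_zero (faceProd θ ν)
  simp only [smul_add, sum_add_distrib] at hfaces
  linear_combination (norm := abel) hfaces

end Boundary

lemma Finset.ssubsets_erase_empty_of_card_le_one {α : Type*} [DecidableEq α] {t : Finset α}
    (ht : t.card ≤ 1) : t.ssubsets.erase ∅ = ∅ := by
  ext s
  simp only [mem_erase, mem_ssubsets, notMem_empty, iff_false, not_and]
  intro hs hst
  have := card_lt_card hst
  exact hs (card_eq_zero.mp (by omega))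

lemma Finset.ssubsets_pair_erase_empty {α : Type*} [DecidableEq α] {p q : α} (hpq : p ≠ q) :
    ({p, q} : Finset α).ssubsets.erase ∅ = {{p}, {q}} := by
  have hp : ({p} : Finset α) ≠ {p, q} := fun h =>
    hpq (by simpa using congrArg (q ∈ ·) h : q = p).symm
  have hq : ({q} : Finset α) ≠ {p, q} := fun h => hpq (by simpa using congrArg (p ∈ ·) h)
  ext s
  simp only [ssubsets, powerset_insert]
  aesop

section PredAbove

variable {ℓ : ℕ} (J : Fin ℓ)

lemma Fin.predAbove_eq_self_iff {x : Fin (ℓ + 1)} :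
    J.predAbove x = J ↔ x = J.castSucc ∨ x = J.succ := by
  refine ⟨fun h => ?_, by rintro (rfl | rfl) <;> simp⟩
  by_contra! hx
  apply hx.2
  rw [← Fin.succAbove_predAbove hx.1, h, Fin.succAbove_castSucc_self]

lemma Fin.eq_of_predAbove_eq {x y : Fin (ℓ + 1)} (hxy : J.predAbove x = J.predAbove y)
    (hx : J.predAbove x ≠ J) : x = y := by
  have hxJ : x ≠ J.castSucc := by rintro rfl; simp at hx
  have hyJ : y ≠ J.castSucc := by rintro rfl; simp [hxy] at hx
  rw [← Fin.succAbove_predAbove hxJ, ← Fin.succAbove_predAbove hyJ, hxy]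

lemma Fin.castSucc_succAbove_predAbove_eq_swap {x : Fin (ℓ + 1)} (hx : x ≠ J.succ) :
    J.castSucc.succAbove (J.predAbove x) = Equiv.swap J.castSucc J.succ x := by
  by_cases hxJ : x = J.castSucc
  · simp [hxJ]
  · rw [Fin.succAbove_predAbove hxJ, Equiv.swap_apply_of_ne_of_ne hxJ hx]

variable {A : Type*} [Ring A] (θ : Fin (ℓ + 1) → A) (σ : Equiv.Perm (Fin (ℓ + 1)))

lemma sum_splitProd_predAbove_of_ne {i : Fin ℓ} (hi : i ≠ J) :
    ∑ s ∈ ({k | J.predAbove (σ k) = i} : Finset _).ssubsets.erase ∅,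
      splitProd θ (fun k => J.predAbove (σ k)) i s = 0 := by
  rw [Finset.ssubsets_erase_empty_of_card_le_one, sum_empty]
  refine card_le_one.mpr fun a ha b hb => σ.injective ?_
  simp only [mem_filter, mem_univ, true_and] at ha hb
  exact Fin.eq_of_predAbove_eq J (ha.trans hb.symm) (ha ▸ hi)

lemma sum_splitProd_predAbove_self :
    ∑ s ∈ ({k | J.predAbove (σ k) = J} : Finset _).ssubsets.erase ∅,
      splitProd θ (fun k => J.predAbove (σ k)) J s
      = obprod (fun k => θ (σ k)) + obprod (fun k => θ (Equiv.swap J.castSucc J.succ (σ k))) := by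
  set p := σ.symm J.castSucc
  set q := σ.symm J.succ
  have hpq : p ≠ q := by simp [p, q, Fin.ext_iff]
  have hfiber : ({k | J.predAbove (σ k) = J} : Finset _) = {p, q} := by
    ext k
    simp [p, q, Fin.predAbove_eq_self_iff, Equiv.eq_symm_apply]
  rw [hfiber, Finset.ssubsets_pair_erase_empty hpq, sum_pair (by simpa using hpq)]
  unfold splitProd
  congr 2 <;> funext k
  · by_cases hk : k = p
    · simp [hk, p]
    · have hσk : σ k ≠ J.castSucc := by simpa [p, Equiv.eq_symm_apply] using hk
      simp [hk, hσk]
  · by_cases hk : k = q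
    · simp [hk, q]
    · have hσk : σ k ≠ J.succ := by simpa [q, Equiv.eq_symm_apply] using hk
      simp [hk, Fin.castSucc_succAbove_predAbove_eq_swap J hσk]

lemma sigmaj_eq_predAbove (j : ℕ) (hj : j < ℓ) :
    sigmaj ℓ σ j hj = fun k => (⟨j, hj⟩ : Fin ℓ).predAbove (σ k) := by
  funext k
  unfold sigmaj
  split_ifs with h
  · rw [Fin.predAbove_of_le_castSucc _ _ (Fin.le_def.2 h)]
    rfl
  · rw [Fin.predAbove_of_castSucc_lt _ _ (Fin.lt_def.2 (by simpa using h))]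
    rfl

end PredAbove

/-- Indices are 0-based: the sign exponents `i + 1`, `j + 1` are the paper's `i`, `j`. -/
theorem stmt9 {A : Type*} [Ring A] (ℓ : ℕ) (θ : Fin (ℓ + 1) → A)
    (σ : Equiv.Perm (Fin (ℓ + 1))) (j : ℕ) (hj : j < ℓ) :
    obprod (fun k => θ ((sigmaj ℓ σ j hj k).succ))
        + (∑ i ∈ Finset.range ℓ,
            (-1 : ℤ) ^ (i + 1) • obprod (fun k => mergeAt θ i (sigmaj ℓ σ j hj k)))
        + (-1 : ℤ) ^ (ℓ + 1) • obprod (fun k => θ ((sigmaj ℓ σ j hj k).castSucc))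
      = (-1 : ℤ) ^ (j + 1) •
          (obprod (fun k => θ (σ k))
            + obprod (fun k =>
                θ (Equiv.swap (⟨j, by omega⟩ : Fin (ℓ + 1)) ⟨j + 1, by omega⟩ (σ k)))) := by
  set J : Fin ℓ := ⟨j, hj⟩
  have hsurj : Function.Surjective fun k => J.predAbove (σ k) :=
    (Fin.predAbove_surjective J).comp σ.surjective
  rw [sigmaj_eq_predAbove, obprod_boundary_eq_sum_splitProd θ _ hsurj,
    sum_eq_single J (fun i _ hi => by rw [sum_splitProd_predAbove_of_ne J θ σ hi, smul_zero])
      (by simp), sum_splitProd_predAbove_self]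
  rfl
end

section
/- Under the hypotheses of the curvature formula (graded algebra A, odd elements ∇₀,…,∇_n with ∇_j² = R_j, θ_j = ∇_{j−1} − ∇_j, central even scalars t_j with t₀ = 0, t_{n+1} = 1), if all R_j = 0 then (∇_n + Σ_{j=1}^{n} t_j θ_j)² = Σ_{i,j=1}^{n} (t_i t_j − t_{min(i,j)}) θ_i θ_j. In particular, for n = 1 this reads (∇₁ + t θ₁)² = (t² − t)·θ₁². -/
/-!
Write `a_n = ∇_n + Σ_{j ≤ n} t_j θ_j`. Since `∇_{n+1} = ∇_n - θ_{n+1}`, we get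
`a_{n+1} = a_n + (t_{n+1} - 1) θ_{n+1}`, and squaring reduces the induction step to the
anticommutator `{a_n, θ_{n+1}} = Σ_j t_j {θ_j, θ_{n+1}} + θ_{n+1}²`, where flatness enters
as `{∇_n, ∇_n - ∇_{n+1}} = (∇_n - ∇_{n+1})²`. The new row, column and diagonal of the
double sum carry exactly the coefficients `(t_{n+1} - 1) t_j` and `(t_{n+1} - 1) + (t_{n+1} - 1)²`.
-/

open Finset

theorem Finset.sum_Icc_sum_Icc_succ_top {M : Type*} [AddCommMonoid M] {a n : ℕ}
    (h : a ≤ n + 1) (f : ℕ → ℕ → M) :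
    ∑ i ∈ Icc a (n + 1), ∑ j ∈ Icc a (n + 1), f i j
      = ∑ i ∈ Icc a n, ∑ j ∈ Icc a n, f i j
        + ∑ i ∈ Icc a n, (f i (n + 1) + f (n + 1) i) + f (n + 1) (n + 1) := by
  simp only [sum_Icc_succ_top h, sum_add_distrib]
  abel

section Anticommutator

variable {A : Type*} [Ring A]

def anticomm (x y : A) : A := x * y + y * x

theorem anticomm_add_left (x x' y : A) :
    anticomm (x + x') y = anticomm x y + anticomm x' y := by
  unfold anticomm
  noncomm_ring

theorem anticomm_sum_mul_left {ι : Type*} (s : Finset ι) (c y : ι → A) (z : A)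
    (hc : ∀ j ∈ s, Commute (c j) z) :
    anticomm (∑ j ∈ s, c j * y j) z = ∑ j ∈ s, c j * anticomm (y j) z := by
  simp only [anticomm, sum_mul, mul_sum, ← sum_add_distrib]
  refine sum_congr rfl fun j hj => ?_
  rw [mul_add, mul_assoc, ← mul_assoc z, ← (hc j hj).eq, mul_assoc]

theorem anticomm_sub_of_mul_self_eq_zero {a b : A} (ha : a * a = 0) (hb : b * b = 0) :
    anticomm a (a - b) = (a - b) * (a - b) := by
  simp only [anticomm, mul_sub, sub_mul, ha, hb]
  abel

theorem Commute.add_mul_sq {c x y : A} (hx : Commute c x) (hy : Commute c y) :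
    (x + c * y) ^ 2 = x ^ 2 + c * anticomm x y + c * c * (y * y) := by
  calc (x + c * y) ^ 2 = x ^ 2 + (x * c) * y + c * (y * x) + c * (y * c) * y := by noncomm_ring
    _ = x ^ 2 + c * anticomm x y + c * c * (y * y) := by
      rw [← hx.eq, ← hy.eq, anticomm]
      noncomm_ring

end Anticommutator

theorem sq_affine_interpolation_of_flat {A : Type*} [Ring A] (nab θ t : ℕ → A)
    (hflat : ∀ j, nab j * nab j = 0) (hθ : ∀ j, 1 ≤ j → θ j = nab (j - 1) - nab j)
    (ht : ∀ j x, Commute (t j) x) (n : ℕ) :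
    (nab n + ∑ j ∈ Icc 1 n, t j * θ j) ^ 2
      = ∑ i ∈ Icc 1 n, ∑ j ∈ Icc 1 n, (t i * t j - t (min i j)) * (θ i * θ j) := by
  induction n with
  | zero => simp [sq, hflat 0]
  | succ n ih =>
    set s := t (n + 1) - 1 with hs_def
    have hs : ∀ x, Commute s x := fun x => (ht _ x).sub_left (Commute.one_left x)
    have hθ' : θ (n + 1) = nab n - nab (n + 1) := hθ (n + 1) (by omega)
    have hsplit : nab (n + 1) + ∑ j ∈ Icc 1 (n + 1), t j * θ j
        = (nab n + ∑ j ∈ Icc 1 n, t j * θ j) + s * θ (n + 1) := by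
      rw [sum_Icc_succ_top (by omega), hθ', hs_def]
      noncomm_ring
    have hanti : anticomm (nab n + ∑ j ∈ Icc 1 n, t j * θ j) (θ (n + 1))
        = ∑ j ∈ Icc 1 n, t j * anticomm (θ j) (θ (n + 1)) + θ (n + 1) * θ (n + 1) := by
      rw [anticomm_add_left, anticomm_sum_mul_left _ _ _ _ fun j _ => ht j _, hθ',
        anticomm_sub_of_mul_self_eq_zero (hflat n) (hflat (n + 1)), add_comm]
    have hcoeff : ∀ j ≤ n, s * (t j * anticomm (θ j) (θ (n + 1)))
        = (t j * t (n + 1) - t (min j (n + 1))) * (θ j * θ (n + 1))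
          + (t (n + 1) * t j - t (min (n + 1) j)) * (θ (n + 1) * θ j) := by
      intro j hj
      rw [anticomm, min_eq_left (by omega), min_eq_right (by omega), (ht j (t (n + 1))).eq,
        ← sub_one_mul, ← mul_add, mul_assoc]
    have hdiag : t (n + 1) * t (n + 1) - t (n + 1) = s + s * s := by
      rw [hs_def]
      noncomm_ring
    rw [hsplit, (hs _).add_mul_sq (hs _), ih, hanti, sum_Icc_sum_Icc_succ_top (by omega),
      mul_add, mul_sum, sum_congr rfl fun j hj => hcoeff j (mem_Icc.mp hj).2, min_self,
      hdiag, add_mul]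
    abel

theorem stmt12_general {A : Type*} [Ring A] (n : ℕ) (nab θ t : ℕ → A)
    (hflat : ∀ j, nab j * nab j = 0)
    (hθ : ∀ j, 1 ≤ j → θ j = nab (j - 1) - nab j)
    (ht : ∀ j x, Commute (t j) x) :
    ((nab n + ∑ j ∈ Finset.Icc 1 n, t j * θ j) ^ 2
        = ∑ i ∈ Finset.Icc 1 n, ∑ j ∈ Finset.Icc 1 n,
            (t i * t j - t (min i j)) * (θ i * θ j))
      ∧ (n = 1 →
          (nab 1 + t 1 * θ 1) ^ 2 = (t 1 * t 1 - t 1) * (θ 1 * θ 1)) := by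
  refine ⟨sq_affine_interpolation_of_flat nab θ t hflat hθ ht n, fun _ => ?_⟩
  simpa using sq_affine_interpolation_of_flat nab θ t hflat hθ ht 1

/-- Flat case of the curvature formula: if all `∇_j² = 0` then
`(∇_n + Σ t_j θ_j)² = Σ_{i,j} (t_i t_j − t_{min(i,j)}) θ_i θ_j`; in particular for
`n = 1`, `(∇₁ + t θ₁)² = (t² − t) θ₁²`. -/
theorem stmt12 {A : Type*} [Ring A] (n : ℕ) (nab θ t : ℕ → A)
    (hflat : ∀ j, nab j * nab j = 0)
    (hθ : ∀ j, 1 ≤ j → θ j = nab (j - 1) - nab j)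
    (ht : ∀ j x, Commute (t j) x) (ht0 : t 0 = 0) (ht1 : t (n + 1) = 1) :
    ((nab n + ∑ j ∈ Finset.Icc 1 n, t j * θ j) ^ 2
        = ∑ i ∈ Finset.Icc 1 n, ∑ j ∈ Finset.Icc 1 n,
            (t i * t j - t (min i j)) * (θ i * θ j))
      ∧ (n = 1 →
          (nab 1 + t 1 * θ 1) ^ 2 = (t 1 * t 1 - t 1) * (θ 1 * θ 1)) :=
  stmt12_general n nab θ t hflat hθ ht
end
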